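/- arXiv:2301.05325 — 9 statements merged into one kernel-verified Lean document; each statement's English description precedes it below -/
import Mathlib

section
/- Suppose a discrete group G acts continuously on a first-countable Hausdorff space X and a point x ∈ X is wandering, i.e. has a neighborhood U with (U|U)_G := {g ∈ G : gU ∩ U ≠ ∅} finite. Then there exists a neighborhood W of x contained in U that is stable under the stabilizer G_x and satisfies gW ∩ W = ∅ for all g ∉ G_x. -/
open scoped Pointwise


/-- If a discrete group `G` acts continuously on a first-countable Hausdorff space `X`
and `x ∈ X` is a wandering point, i.e. has a neighborhood `U` with
`(U|U)_G = {g : G | g • U ∩ U ≠ ∅}` finite, then there is a `G`-slice at `x`: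
a neighborhood `W ⊆ U` of `x` that is stable under the stabilizer `G_x` and satisfies
`g • W ∩ W = ∅` for all `g ∉ G_x`. -/
theorem exists_slice_of_wandering
    {G X : Type*} [Group G] [TopologicalSpace G] [DiscreteTopology G]
    [TopologicalSpace X] [T2Space X] [FirstCountableTopology X]
    [MulAction G X] [ContinuousSMul G X]
    (x : X) (U : Set X) (hU : U ∈ nhds x)
    (hfin : {g : G | ((g • ·) '' U ∩ U).Nonempty}.Finite) :
    ∃ W ∈ nhds x, W ⊆ U ∧
      (∀ g ∈ MulAction.stabilizer G x, (g • ·) '' W = W) ∧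
      (∀ g ∉ MulAction.stabilizer G x, (g • ·) '' W ∩ W = ∅) := by
  classical
  simp only [Set.image_smul] at hfin ⊢
  set F := {g : G | (g • U ∩ U).Nonempty} with hF
  have hxU : x ∈ U := mem_of_mem_nhds hU
  set H : Set G := (MulAction.stabilizer G x : Set G) with hHdef
  have hHF : H ⊆ F := by
    intro g hg
    exact ⟨x, ⟨x, hxU, hg⟩, hxU⟩
  have hHfin : H.Finite := hfin.subset hHF
  set S : Set G := F \ H with hSdef
  have hSfin : S.Finite := hfin.diff
  -- separate g•x from x for g ∈ S
  have hsep : ∀ g ∈ S, ∃ V ∈ nhds x, g • V ∩ V = ∅ := by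
    intro g hg
    have hne : g • x ≠ x := fun h => hg.2 h
    obtain ⟨A, B, hA, hB, hgA, hxB, hAB⟩ := t2_separation hne
    refine ⟨B ∩ g⁻¹ • A, Filter.inter_mem (hB.mem_nhds hxB) ?_, ?_⟩
    · have : g⁻¹ • A ∈ nhds (g⁻¹ • (g • x)) := smul_mem_nhds_smul g⁻¹ (hA.mem_nhds hgA)
      simpa using this
    · apply Set.eq_empty_of_forall_notMem
      rintro z ⟨⟨y, ⟨_, hyA⟩, rfl⟩, hzB, _⟩
      have : g • y ∈ A := by
        have := Set.smul_mem_smul_set (a := g) hyA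
        simpa [smul_smul] using this
      exact hAB.le_bot ⟨this, hzB⟩
  choose! V hVnhds hVdisj using hsep
  set V₀ : Set X := U ∩ ⋂ g ∈ S, V g with hV0
  have hV₀nhds : V₀ ∈ nhds x := by
    refine Filter.inter_mem hU ((Filter.biInter_mem hSfin).2 hVnhds)
  have hV₀U : V₀ ⊆ U := Set.inter_subset_left
  have hV₀V : ∀ g ∈ S, V₀ ⊆ V g := fun g hg =>
    Set.inter_subset_right.trans (Set.biInter_subset_of_mem hg)
  set W : Set X := ⋂ h ∈ H, h • V₀ with hW
  have hmemW : ∀ z : X, z ∈ W ↔ ∀ h ∈ H, h⁻¹ • z ∈ V₀ := by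
    intro z
    simp only [hW, Set.mem_iInter, Set.mem_smul_set_iff_inv_smul_mem]
  have hWnhds : W ∈ nhds x := by
    refine (Filter.biInter_mem hHfin).2 ?_
    intro h hh
    have : h • V₀ ∈ nhds (h • x) := smul_mem_nhds_smul h hV₀nhds
    rwa [(show h • x = x from hh)] at this
  have hWV₀ : W ⊆ V₀ := by
    intro z hz
    have := (hmemW z).1 hz 1 (one_mem _)
    simpa using this
  refine ⟨W, hWnhds, hWV₀.trans hV₀U, ?_, ?_⟩
  · intro k hk
    ext z
    rw [Set.mem_smul_set_iff_inv_smul_mem, hmemW, hmemW]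
    constructor
    · intro hz h hh
      have := hz (k⁻¹ * h) (mul_mem (inv_mem hk) hh)
      simpa [mul_smul] using this
    · intro hz h hh
      have := hz (k * h) (mul_mem hk hh)
      simpa [mul_smul] using this
  · intro g hg
    apply Set.eq_empty_of_forall_notMem
    rintro z ⟨hz1, hz2⟩
    by_cases hgF : g ∈ F
    · have hgS : g ∈ S := ⟨hgF, hg⟩
      have hd := hVdisj g hgS
      have : z ∈ g • V g ∩ V g := by
        refine ⟨?_, hV₀V g hgS (hWV₀ hz2)⟩
        obtain ⟨y, hy, rfl⟩ := hz1
        exact Set.smul_mem_smul_set (hV₀V g hgS (hWV₀ hy))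
      rw [hd] at this; exact this
    · apply hgF
      obtain ⟨y, hy, rfl⟩ := hz1
      exact ⟨g • y, Set.smul_mem_smul_set (hWV₀ hy).1, (hWV₀ hz2).1⟩
end

section
/- A continuous action of a discrete group G on a first-countable Hausdorff space X is wandering at a point x (i.e., some neighborhood U of x has (U|U)_G finite) if and only if x is not dynamically related to itself, i.e., there is no sequence g_n → ∞ in G and sequence x_n → x with g_n x_n → x. -/
open Filter

/-- `x` and `y` are `G`-dynamically related: there are sequences `g n → ∞` in `G`
(i.e. leaving every finite subset, which for a discrete group means tending to the
cofinite filter) and `x n → x` such that `g n • x n → y`. -/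
def DynamicallyRelated {G X : Type*} [Group G] [TopologicalSpace X] [MulAction G X]
    (x y : X) : Prop :=
  ∃ g : ℕ → G, ∃ xs : ℕ → X,
    Tendsto g atTop cofinite ∧ Tendsto xs atTop (nhds x) ∧
      Tendsto (fun n => g n • xs n) atTop (nhds y)

/-- From a family of infinite sets one can choose an injective selection. -/
lemma exists_injective_seq_mem {α : Type*} (S : ℕ → Set α) (hS : ∀ n, (S n).Infinite) :
    ∃ g : ℕ → α, Function.Injective g ∧ ∀ n, g n ∈ S n := by
  classical
  choose f hf1 hf2 using fun n (t : Finset α) => (hS n).exists_notMem_finset t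
  let L : ℕ → List α := fun n => Nat.rec [] (fun k acc => acc ++ [f k acc.toFinset]) n
  set g : ℕ → α := fun n => f n (L n).toFinset with hg
  have hmem : ∀ m n, m < n → g m ∈ L n := by
    intro m n hmn
    induction n with
    | zero => omega
    | succ k ih =>
        have hLk : L (k + 1) = L k ++ [g k] := rfl
        rcases Nat.lt_succ_iff_lt_or_eq.mp hmn with h | h
        · rw [hLk]
          exact List.mem_append_left _ (ih h)
        · subst h
          rw [hLk]
          exact List.mem_append_right _ (List.mem_singleton_self _)
  refine ⟨g, ?_, fun n => hf1 n (L n).toFinset⟩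
  intro m n hmn
  by_contra hne
  rcases Nat.lt_or_ge m n with h | h
  · apply hf2 n (L n).toFinset
    rw [show f n (L n).toFinset = g n from rfl, ← hmn]
    exact List.mem_toFinset.mpr (hmem m n h)
  · have h' : n < m := lt_of_le_of_ne h (fun e => hne e.symm)
    apply hf2 m (L m).toFinset
    rw [show f m (L m).toFinset = g m from rfl, hmn]
    exact List.mem_toFinset.mpr (hmem n m h')

/-- A continuous action of a discrete group `G` on a first-countable Hausdorff space `X`
is wandering at `x` (some neighborhood `U` of `x` has `(U|U)_G` finite) if and only if
`x` is not dynamically related to itself. -/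
theorem wandering_iff_not_self_dynamically_related
    {G X : Type*} [Group G] [TopologicalSpace G] [DiscreteTopology G]
    [TopologicalSpace X] [T2Space X] [FirstCountableTopology X]
    [MulAction G X] [ContinuousSMul G X] (x : X) :
    (∃ U ∈ nhds x, {g : G | ((g • ·) '' U ∩ U).Nonempty}.Finite) ↔
      ¬ DynamicallyRelated (G := G) x x := by
  constructor
  · rintro ⟨U, hU, hfin⟩ ⟨g, xs, hg, hxs, hgxs⟩
    have h1 : ∀ᶠ n in atTop, xs n ∈ U := hxs.eventually_mem hU
    have h2 : ∀ᶠ n in atTop, g n • xs n ∈ U := hgxs.eventually_mem hU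
    have h3 : ∀ᶠ n in atTop, g n ∉ {g : G | ((g • ·) '' U ∩ U).Nonempty} := by
      have : {g : G | ((g • ·) '' U ∩ U).Nonempty}ᶜ ∈ cofinite := by
        simpa [Filter.mem_cofinite] using hfin
      exact hg.eventually this
    rcases ((h1.and h2).and h3).exists with ⟨n, ⟨hn1, hn2⟩, hn3⟩
    exact hn3 ⟨g n • xs n, ⟨xs n, hn1, rfl⟩, hn2⟩
  · intro hnot
    by_contra hW
    apply hnot
    obtain ⟨U, hU⟩ := (nhds x).exists_antitone_basis
    set S : ℕ → Set G := fun n => {g : G | ((g • ·) '' (U n) ∩ U n).Nonempty} with hSdef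
    have hSinf : ∀ n, (S n).Infinite := by
      intro n
      by_contra h
      rw [Set.not_infinite] at h
      exact hW ⟨U n, hU.mem n, h⟩
    obtain ⟨g, hginj, hgmem⟩ := exists_injective_seq_mem S hSinf
    have hz : ∀ n, ∃ z, z ∈ U n ∧ g n • z ∈ U n := by
      intro n
      rcases hgmem n with ⟨y, ⟨z, hz, rfl⟩, hy⟩
      exact ⟨z, hz, hy⟩
    choose xs hxs1 hxs2 using hz
    refine ⟨g, xs, ?_, ?_, ?_⟩
    · rw [← Nat.cofinite_eq_atTop]
      exact hginj.tendsto_cofinite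
    · exact hU.tendsto hxs1
    · exact hU.tendsto hxs2
end

section
/- For a continuous action of a discrete group G on a first-countable Hausdorff space X, the following are equivalent: (a) for every compact K ⊆ X, the set (K|K)_G = {g : gK ∩ K ≠ ∅} is finite; (b) no two points of X are G-dynamically related. -/
open Filter

/-- For a continuous action of a discrete group `G` on a first-countable Hausdorff
space `X`, the following are equivalent: (a) for every compact `K ⊆ X` the transporter
set `(K|K)_G = {g : G | g • K ∩ K ≠ ∅}` is finite; (b) no two points of `X` are
`G`-dynamically related. -/
theorem properly_discontinuous_iff_no_dynamical_relation
    {G X : Type*} [Group G] [TopologicalSpace G] [DiscreteTopology G]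
    [TopologicalSpace X] [T2Space X] [FirstCountableTopology X]
    [MulAction G X] [ContinuousSMul G X] :
    (∀ K : Set X, IsCompact K → {g : G | ((g • ·) '' K ∩ K).Nonempty}.Finite) ↔
      ∀ x y : X, ¬ DynamicallyRelated (G := G) x y := by
  constructor
  · rintro hK x y ⟨g, xs, hg, hxs, hgxs⟩
    set K : Set X := insert x (Set.range xs) ∪ insert y (Set.range fun n => g n • xs n)
    have hKc : IsCompact K :=
      hxs.isCompact_insert_range.union hgxs.isCompact_insert_range
    have hT := hK K hKc
    have hmem : ∀ n, g n ∈ {g : G | ((g • ·) '' K ∩ K).Nonempty} := by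
      intro n
      refine ⟨g n • xs n, ⟨xs n, ?_, rfl⟩, ?_⟩
      · exact Or.inl (Set.mem_insert_iff.2 (Or.inr ⟨n, rfl⟩))
      · exact Or.inr (Set.mem_insert_iff.2 (Or.inr ⟨n, rfl⟩))
    have := (hg.eventually hT.eventually_cofinite_notMem).exists
    obtain ⟨n, hn⟩ := this
    exact hn (hmem n)
  · intro h K hKc
    by_contra hinf
    rw [← Set.not_infinite, not_not] at hinf
    -- choose an injective sequence in the transporter set
    let e := hinf.natEmbedding
    set g : ℕ → G := fun n => (e n : G) with hgdef
    have hginj : Function.Injective g := fun a b hab => e.injective (Subtype.ext hab)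
    have hgmem : ∀ n, ((g n • ·) '' K ∩ K).Nonempty := fun n => (e n).2
    choose z hz1 hz2 using hgmem
    choose w hw hweq using hz1
    -- w n ∈ K, g n • w n = z n ∈ K
    obtain ⟨x, hxK, φ, hφ, hφt⟩ := hKc.isSeqCompact hw
    have hw2 : ∀ n, g (φ n) • w (φ n) ∈ K := fun n =>
      by have := hweq (φ n); simp only [] at this; rw [this]; exact hz2 (φ n)
    obtain ⟨y, hyK, ψ, hψ, hψt⟩ := hKc.isSeqCompact hw2
    refine h x y ⟨g ∘ φ ∘ ψ, w ∘ φ ∘ ψ, ?_, ?_, hψt⟩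
    · have : Function.Injective (g ∘ φ ∘ ψ) :=
        hginj.comp (hφ.injective.comp hψ.injective)
      simpa [Nat.cofinite_eq_atTop] using this.tendsto_cofinite
    · exact hφt.comp hψ.tendsto_atTop
end

section
/- For a continuous action of a discrete group G on a first-countable Hausdorff space X, if for any pair of points x, y ∈ X there are neighborhoods U of x and V of y with (U|V)_G finite, then for every compact K ⊆ X there is an open neighborhood U of K with (U|U)_G finite. -/
/-- For a continuous action of a discrete group `G` on a first-countable Hausdorff
space `X`: if every pair of points `x, y ∈ X` admits neighborhoods `U` of `x` and
`V` of `y` with `(U|V)_G = {g : G | g • U ∩ V ≠ ∅}` finite, then every compact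
`K ⊆ X` has an open neighborhood `U` with `(U|U)_G` finite. -/
theorem compact_nbhd_of_pointwise_properness
    {G X : Type*} [Group G] [TopologicalSpace G] [DiscreteTopology G]
    [TopologicalSpace X] [T2Space X] [FirstCountableTopology X]
    [MulAction G X] [ContinuousSMul G X]
    (h : ∀ x y : X, ∃ U ∈ nhds x, ∃ V ∈ nhds y,
      {g : G | ((g • ·) '' U ∩ V).Nonempty}.Finite) :
    ∀ K : Set X, IsCompact K → ∃ U : Set X, IsOpen U ∧ K ⊆ U ∧
      {g : G | ((g • ·) '' U ∩ U).Nonempty}.Finite := by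
  intro K hK
  have step1 : ∀ x : X, ∃ A : Set X, IsOpen A ∧ x ∈ A ∧ ∃ B : Set X, IsOpen B ∧ K ⊆ B ∧
      {g : G | ((g • ·) '' A ∩ B).Nonempty}.Finite := by
    intro x
    choose U hU V hV hfin using h x
    obtain ⟨t, htK, hcov⟩ := hK.elim_nhds_subcover (fun y => interior (V y))
      (fun y _ => isOpen_interior.mem_nhds (mem_interior_iff_mem_nhds.2 (hV y)))
    refine ⟨⋂ y ∈ t, interior (U y), ?_, ?_, ⋃ y ∈ t, interior (V y), ?_, hcov, ?_⟩
    · exact isOpen_biInter_finset (fun y _ => isOpen_interior)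
    · exact Set.mem_iInter₂.2 fun y _ => mem_interior_iff_mem_nhds.2 (hU y)
    · exact isOpen_biUnion fun y _ => isOpen_interior
    · apply Set.Finite.subset (Set.Finite.biUnion t.finite_toSet (fun y _ => hfin y))
      rintro g ⟨z, ⟨⟨a, ha, rfl⟩, hz⟩⟩
      obtain ⟨y, hy, hzy⟩ := Set.mem_iUnion₂.1 hz
      exact Set.mem_iUnion₂.2 ⟨y, hy,
        ⟨g • a, ⟨a, interior_subset (Set.mem_iInter₂.1 ha y hy), rfl⟩, interior_subset hzy⟩⟩
  choose A hAopen hAmem B hBopen hBK hfin using step1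
  obtain ⟨s, hsmem, hscov⟩ := hK.elim_nhds_subcover A (fun x _ => (hAopen x).mem_nhds (hAmem x))
  refine ⟨(⋃ x ∈ s, A x) ∩ ⋂ x ∈ s, B x, ?_, ?_, ?_⟩
  · exact (isOpen_biUnion fun x _ => hAopen x).inter (isOpen_biInter_finset fun x _ => hBopen x)
  · exact fun k hk => ⟨hscov hk, Set.mem_iInter₂.2 fun x _ => hBK x hk⟩
  · apply Set.Finite.subset (Set.Finite.biUnion s.finite_toSet (fun x _ => hfin x))
    rintro g ⟨z, ⟨⟨a, ⟨haU, haB⟩, rfl⟩, hzU, hzB⟩⟩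
    obtain ⟨x, hx, hax⟩ := Set.mem_iUnion₂.1 haU
    exact Set.mem_iUnion₂.2 ⟨x, hx, ⟨g • a, ⟨a, hax, rfl⟩, Set.mem_iInter₂.1 hzB x hx⟩⟩
end

section
/- Let G be a discrete group acting equicontinuously by homeomorphisms on a metric space X. If there is no point x ∈ X and sequence h_n → ∞ in G with h_n x → x, then no two points of X are G-dynamically related. -/
open Filter

/-- Let a discrete group `G` act equicontinuously by homeomorphisms on a metric
space `X`. If there is no point `x ∈ X` and sequence `h n → ∞` in `G` with
`h n • x → x`, then no two points of `X` are `G`-dynamically related. -/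
theorem no_dynamical_relation_of_no_recurrent_point
    {G X : Type*} [Group G] [MetricSpace X] [MulAction G X]
    (hcont : ∀ g : G, Continuous fun x : X => g • x)
    (hequi : Equicontinuous fun g : G => fun x : X => g • x)
    (hno : ¬ ∃ x : X, ∃ h : ℕ → G, Tendsto h atTop cofinite ∧
      Tendsto (fun n => h n • x) atTop (nhds x)) :
    ∀ x y : X, ¬ DynamicallyRelated (G := G) x y := by
  classical
  rintro x y ⟨g, xs, hg, hxs, hgxs⟩
  apply hno
  have key : ∀ z : X, ∀ ε > (0:ℝ), ∃ δ > (0:ℝ), ∀ w, dist w z < δ →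
      ∀ a : G, dist (a • z) (a • w) < ε := by
    intro z ε hε
    exact Metric.equicontinuousAt_iff.mp (hequi z) ε hε
  -- `g n • x → y`
  have hgy : Tendsto (fun n => g n • x) atTop (nhds y) := by
    rw [Metric.tendsto_atTop]
    intro ε hε
    obtain ⟨δ, hδ, H⟩ := key x (ε/2) (by linarith)
    obtain ⟨N1, hN1⟩ := Metric.tendsto_atTop.mp hxs δ hδ
    obtain ⟨N2, hN2⟩ := Metric.tendsto_atTop.mp hgxs (ε/2) (by linarith)
    refine ⟨max N1 N2, fun n hn => ?_⟩
    have h1 := H (xs n) (hN1 n (le_trans (le_max_left _ _) hn)) (g n)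
    have h2 := hN2 n (le_trans (le_max_right _ _) hn)
    calc dist (g n • x) y ≤ dist (g n • x) (g n • xs n) + dist (g n • xs n) y :=
          dist_triangle _ _ _
      _ < ε/2 + ε/2 := add_lt_add h1 h2
      _ = ε := by ring
  -- `(g n)⁻¹ • y → x`
  have hginvx : Tendsto (fun n => (g n)⁻¹ • y) atTop (nhds x) := by
    rw [Metric.tendsto_atTop]
    intro ε hε
    obtain ⟨δ, hδ, H⟩ := key y (ε/2) (by linarith)
    obtain ⟨N1, hN1⟩ := Metric.tendsto_atTop.mp hxs (ε/2) (by linarith)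
    obtain ⟨N2, hN2⟩ := Metric.tendsto_atTop.mp hgxs δ hδ
    refine ⟨max N1 N2, fun n hn => ?_⟩
    have h1 := H (g n • xs n)
      (hN2 n (le_trans (le_max_right _ _) hn)) (g n)⁻¹
    have h2 := hN1 n (le_trans (le_max_left _ _) hn)
    have hx : (g n)⁻¹ • (g n • xs n) = xs n := inv_smul_smul _ _
    rw [hx] at h1
    calc dist ((g n)⁻¹ • y) x ≤ dist ((g n)⁻¹ • y) (xs n) + dist (xs n) x :=
          dist_triangle _ _ _
      _ < ε/2 + ε/2 := add_lt_add h1 h2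
      _ = ε := by ring
  -- key extraction lemma
  have L : ∀ ε > (0:ℝ), ∀ S : Finset G, ∃ h : G, h ∉ S ∧ dist (h • x) x < ε := by
    intro ε hε S
    obtain ⟨N, hN⟩ := Metric.tendsto_atTop.mp hginvx (ε/2) (by linarith)
    obtain ⟨δ, hδ, H⟩ := key y (ε/2) (by linarith)
    have hfin : ∀ᶠ m in atTop, g m ∉ (S.image fun s => g N * s) := by
      have h1 : ((↑(S.image fun s => g N * s) : Set G))ᶜ ∈ cofinite :=
        (Finset.finite_toSet _).compl_mem_cofinite
      have h2 : ∀ᶠ m in atTop, g m ∈ ((↑(S.image fun s => g N * s) : Set G))ᶜ := hg h1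
      exact h2.mono (fun m hm => by simpa using hm)
    have hclose : ∀ᶠ m in atTop, dist (g m • x) y < δ := by
      obtain ⟨M, hM⟩ := Metric.tendsto_atTop.mp hgy δ hδ
      exact eventually_atTop.mpr ⟨M, hM⟩
    obtain ⟨m, hm1, hm2⟩ := (hfin.and hclose).exists
    refine ⟨(g N)⁻¹ * g m, ?_, ?_⟩
    · intro hmem
      exact hm1 (Finset.mem_image.mpr ⟨(g N)⁻¹ * g m, hmem, by rw [mul_inv_cancel_left]⟩)
    · have h1 := H (g m • x) hm2 (g N)⁻¹
      have h2 := hN N le_rfl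
      have hms : ((g N)⁻¹ * g m) • x = (g N)⁻¹ • (g m • x) := mul_smul _ _ _
      rw [hms]
      calc dist ((g N)⁻¹ • (g m • x)) x
          ≤ dist ((g N)⁻¹ • (g m • x)) ((g N)⁻¹ • y) + dist ((g N)⁻¹ • y) x :=
            dist_triangle _ _ _
        _ < ε/2 + ε/2 := add_lt_add (by rw [dist_comm]; exact h1) h2
        _ = ε := by ring
  choose! pick hp1 hp2 using L
  -- build the recurrent sequence
  set F : ℕ → G × Finset G := fun k =>
    Nat.rec (pick 1 ∅, {pick 1 ∅})
      (fun k p => (pick (1/(k+2)) p.2, insert (pick (1/(k+2)) p.2) p.2)) k with hF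
  set f : ℕ → G := fun k => (F k).1 with hf
  have hpos : ∀ k : ℕ, (0:ℝ) < 1/(k+2) := by
    intro k; positivity
  have hFs : ∀ k : ℕ, F (k+1) =
      (pick (1/(k+2)) (F k).2, insert (pick (1/(k+2)) (F k).2) (F k).2) := fun k => rfl
  have hmem : ∀ k, f k ∈ (F k).2 := by
    intro k
    cases k with
    | zero => exact Finset.mem_singleton_self _
    | succ k => rw [hf]; rw [hFs k]; exact Finset.mem_insert_self _ _
  have hmono : ∀ k, (F k).2 ⊆ (F (k+1)).2 := by
    intro k; rw [hFs k]; exact Finset.subset_insert _ _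
  have hmemle : ∀ j k, j ≤ k → f j ∈ (F k).2 := by
    intro j k hjk
    induction k with
    | zero => rw [Nat.le_zero.mp hjk]; exact hmem 0
    | succ k ih =>
      rcases Nat.lt_or_ge j (k+1) with h | h
      · exact hmono k (ih (Nat.lt_succ_iff.mp h))
      · rw [le_antisymm hjk h]; exact hmem (k+1)
  have hnot : ∀ k, f (k+1) ∉ (F k).2 := by
    intro k
    have h1 : f (k+1) = pick (1/(k+2)) (F k).2 := congrArg Prod.fst (hFs k)
    rw [h1]
    exact hp1 _ (hpos k) _
  have hinj : Function.Injective f := by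
    have haux : ∀ a b : ℕ, a < b → f a ≠ f b := by
      intro a b hab heq
      obtain ⟨b', rfl⟩ := Nat.exists_eq_add_of_lt hab
      have h1 : f a ∈ (F (a + b')).2 := hmemle a (a + b') (Nat.le_add_right _ _)
      rw [heq] at h1
      exact hnot (a + b') h1
    intro a b heq
    rcases lt_trichotomy a b with h | h | h
    · exact absurd heq (haux a b h)
    · exact h
    · exact absurd heq.symm (haux b a h)
  have hdist : ∀ k : ℕ, dist (f k • x) x < 1/(k+1) := by
    intro k
    cases k with
    | zero =>
      have : f 0 = pick 1 ∅ := rfl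
      rw [this]
      simpa using hp2 1 one_pos ∅
    | succ k =>
      have h1 : f (k+1) = pick (1/(k+2)) (F k).2 := congrArg Prod.fst (hFs k)
      rw [h1]
      have := hp2 _ (hpos k) (F k).2
      convert this using 2
      push_cast
      ring
  refine ⟨x, f, ?_, ?_⟩
  · exact Nat.cofinite_eq_atTop ▸ hinj.tendsto_cofinite
  · rw [Metric.tendsto_atTop]
    intro ε hε
    obtain ⟨N, hN⟩ := exists_nat_one_div_lt hε
    refine ⟨N, fun n hn => ?_⟩
    calc dist (f n • x) x < 1/(n+1) := hdist n
      _ ≤ 1/(N+1) := by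
          apply one_div_le_one_div_of_le
          · positivity
          · push_cast; linarith [(Nat.cast_le (α := ℝ)).mpr hn]
      _ < ε := hN
end

section
/- Let E be a metrically proper subset of a metric space (X,d) (each metric ball contains finitely many points of E). Then each open Voronoi tile V_x = {y : d(y,x) < d(y,x') for all x' ∈ E, x' ≠ x} is open in X, and the family of closed tiles V̂_x = {y : d(y,x) ≤ d(y,x') for all x' ∈ E \ {x}} is locally finite. -/
/-- Let `E` be a metrically proper subset of a metric space `(X, d)` (every metric
ball contains only finitely many points of `E`). Then each open Voronoi tile
`V x = {y : d(y,x) < d(y,x') for all x' ∈ E, x' ≠ x}` is open in `X`, and the family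
of closed tiles `V̂ x = {y : d(y,x) ≤ d(y,x') for all x' ∈ E \ {x}}`, indexed by
`x ∈ E`, is locally finite. -/
theorem voronoi_tiles_open_and_locally_finite
    {X : Type*} [MetricSpace X] (E : Set X)
    (hE : ∀ (c : X) (r : ℝ), (E ∩ Metric.ball c r).Finite) :
    (∀ x ∈ E, IsOpen {y : X | ∀ x' ∈ E, x' ≠ x → dist y x < dist y x'}) ∧
    LocallyFinite (fun x : E =>
      {y : X | ∀ x' ∈ E, x' ≠ (x : X) → dist y (x : X) ≤ dist y x'}) := by
  classical
  constructor
  · intro x hx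
    rw [Metric.isOpen_iff]
    intro y hy
    simp only [Set.mem_setOf_eq] at hy
    set r := dist y x with hr
    have hF : (E ∩ Metric.ball y (r + 2)).Finite := hE y (r + 2)
    set t : Finset X := hF.toFinset.erase x with ht
    set s : Finset ℝ := insert 1 (t.image fun x' => dist y x' - r) with hs
    have hsne : s.Nonempty := ⟨1, Finset.mem_insert_self _ _⟩
    set ε := s.min' hsne with hε
    have hεpos : 0 < ε := by
      apply (Finset.lt_min'_iff _ _).mpr
      intro b hb
      rcases Finset.mem_insert.mp hb with h1 | h2
      · simp [h1]
      · obtain ⟨x', hx', rfl⟩ := Finset.mem_image.mp h2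
        have hmem := Finset.mem_erase.mp hx'
        have hx'E : x' ∈ E := (hF.mem_toFinset.mp hmem.2).1
        have := hy x' hx'E hmem.1
        linarith
    have hε1 : ε ≤ 1 := Finset.min'_le _ _ (Finset.mem_insert_self _ _)
    refine ⟨ε / 2, by linarith, ?_⟩
    intro z hz
    rw [Metric.mem_ball] at hz
    simp only [Set.mem_setOf_eq]
    intro x' hx'E hne
    have hzx : dist z x < r + ε / 2 := by
      calc dist z x ≤ dist z y + dist y x := dist_triangle _ _ _
        _ < ε / 2 + r := by linarith
        _ = r + ε / 2 := by ring
    have hyz : dist y z < ε / 2 := by rwa [dist_comm] at hz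
    by_cases hmem : x' ∈ Metric.ball y (r + 2)
    · have hx't : x' ∈ t := Finset.mem_erase.mpr ⟨hne, hF.mem_toFinset.mpr ⟨hx'E, hmem⟩⟩
      have h1 : ε ≤ dist y x' - r :=
        Finset.min'_le _ _ (Finset.mem_insert_of_mem (Finset.mem_image_of_mem _ hx't))
      have h3 := dist_triangle y z x'
      linarith
    · have h2 : r + 2 ≤ dist y x' := le_of_not_gt (by simpa [Metric.mem_ball, dist_comm] using hmem)
      have h3 := dist_triangle y z x'
      linarith
  · rcases E.eq_empty_or_nonempty with rfl | ⟨x₀, hx₀⟩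
    · intro y
      refine ⟨Set.univ, Filter.univ_mem, ?_⟩
      haveI : IsEmpty (↥(∅ : Set X)) := Set.isEmpty_coe_sort.mpr rfl
      exact Set.toFinite _
    · intro y
      refine ⟨Metric.ball y 1, Metric.ball_mem_nhds y one_pos, ?_⟩
      have hfin : ((fun i : E => (i : X)) ⁻¹' (E ∩ Metric.ball y (dist y x₀ + 3))).Finite :=
        (hE y (dist y x₀ + 3)).preimage (Subtype.val_injective.injOn)
      apply hfin.subset
      rintro ⟨x, hxE⟩ ⟨z, hz1, hz2⟩
      simp only [Set.mem_setOf_eq] at hz1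
      rw [Metric.mem_ball] at hz2
      have hzx₀ : dist z x ≤ dist z x₀ := by
        by_cases h : x₀ = x
        · rw [h]
        · exact hz1 x₀ hx₀ h
      simp only [Set.mem_preimage, Set.mem_inter_iff, Metric.mem_ball]
      refine ⟨hxE, ?_⟩
      rw [dist_comm x y]
      calc dist y x ≤ dist y z + dist z x := dist_triangle _ _ _
        _ ≤ dist y z + dist z x₀ := by linarith
        _ ≤ dist y z + (dist z y + dist y x₀) := by linarith [dist_triangle z y x₀]
        _ < dist y x₀ + 3 := by
            have : dist y z < 1 := by rwa [dist_comm] at hz2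
            linarith
end

section
/- Let (X,d) be a geodesic metric space and E ⊆ X a metrically proper subset. Then each closed Voronoi tile V̂_x = {y : d(y,x) ≤ d(y,x') for all x' ∈ E \ {x}} is starlike with respect to x: for every z ∈ V̂_x, every geodesic segment from x to z is contained in V̂_x. The same holds for the open tile V_x. -/
/-- A metric space is geodesic if any two points are joined by an isometrically
parametrized path (a geodesic segment). -/
def IsGeodesicSpace (X : Type*) [MetricSpace X] : Prop :=
  ∀ x y : X, ∃ f : ℝ → X, f 0 = x ∧ f (dist x y) = y ∧
    ∀ s ∈ Set.Icc (0 : ℝ) (dist x y), ∀ t ∈ Set.Icc (0 : ℝ) (dist x y),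
      dist (f s) (f t) = |s - t|

/-- Let `(X, d)` be a geodesic metric space and `E ⊆ X` a metrically proper subset.
Then each closed Voronoi tile `V̂ x` is starlike with respect to its center `x`: for
every `z ∈ V̂ x`, every geodesic segment from `x` to `z` is contained in `V̂ x`.
The same holds for the open tile `V x`. -/
theorem voronoi_tiles_starlike
    {X : Type*} [MetricSpace X] (hgeo : IsGeodesicSpace X) (E : Set X)
    (hE : ∀ (c : X) (r : ℝ), (E ∩ Metric.ball c r).Finite)
    (x : X) (hx : x ∈ E) (z : X) (f : ℝ → X)
    (hf0 : f 0 = x) (hfz : f (dist x z) = z)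
    (hfiso : ∀ s ∈ Set.Icc (0 : ℝ) (dist x z), ∀ t ∈ Set.Icc (0 : ℝ) (dist x z),
      dist (f s) (f t) = |s - t|) :
    (z ∈ {y : X | ∀ x' ∈ E, x' ≠ x → dist y x ≤ dist y x'} →
      ∀ t ∈ Set.Icc (0 : ℝ) (dist x z),
        f t ∈ {y : X | ∀ x' ∈ E, x' ≠ x → dist y x ≤ dist y x'}) ∧
    (z ∈ {y : X | ∀ x' ∈ E, x' ≠ x → dist y x < dist y x'} →
      ∀ t ∈ Set.Icc (0 : ℝ) (dist x z),
        f t ∈ {y : X | ∀ x' ∈ E, x' ≠ x → dist y x < dist y x'}) := by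
  have key : ∀ t ∈ Set.Icc (0 : ℝ) (dist x z),
      dist (f t) x = t ∧ dist z (f t) = dist x z - t := by
    intro t ht
    have h0 : (0:ℝ) ∈ Set.Icc (0:ℝ) (dist x z) := ⟨le_refl _, dist_nonneg⟩
    have hD : dist x z ∈ Set.Icc (0:ℝ) (dist x z) := ⟨dist_nonneg, le_refl _⟩
    have h1 := hfiso t ht 0 h0
    have h2 := hfiso (dist x z) hD t ht
    rw [hf0] at h1
    rw [hfz] at h2
    constructor
    · rw [h1, sub_zero, abs_of_nonneg ht.1]
    · rw [h2, abs_of_nonneg (by linarith [ht.2])]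
  constructor
  · intro hz t ht x' hx' hne
    obtain ⟨ha, hb⟩ := key t ht
    have h1 : dist z x ≤ dist z x' := hz x' hx' hne
    have h2 : dist z x' ≤ dist z (f t) + dist (f t) x' := dist_triangle _ _ _
    have h3 : dist z x = dist x z := dist_comm _ _
    linarith
  · intro hz t ht x' hx' hne
    obtain ⟨ha, hb⟩ := key t ht
    have h1 : dist z x < dist z x' := hz x' hx' hne
    have h2 : dist z x' ≤ dist z (f t) + dist (f t) x' := dist_triangle _ _ _
    have h3 : dist z x = dist x z := dist_comm _ _
    linarith
end

section
/- Let (M,d) be a separable metric space and φ : M → (0,∞) a continuous function. Then there exists a countable, closed, discrete subset C ⊆ M such that for every z ∈ M the open ball B(z, φ(z)) meets C. -/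
/-- Let `(M, d)` be a separable metric space and `φ : M → (0, ∞)` a continuous
function. Then there is a countable, closed, discrete subset `C ⊆ M` such that every
open ball `B(z, φ z)` meets `C`. -/
theorem exists_countable_closed_discrete_net
    {M : Type*} [MetricSpace M] [TopologicalSpace.SeparableSpace M]
    (φ : M → ℝ) (hφpos : ∀ z : M, 0 < φ z) (hφcont : Continuous φ) :
    ∃ C : Set M, C.Countable ∧ IsClosed C ∧ DiscreteTopology C ∧
      ∀ z : M, (Metric.ball z (φ z) ∩ C).Nonempty := by
  -- the separation property
  set S : Set (Set M) := {A | ∀ x ∈ A, ∀ y ∈ A, x ≠ y → min (φ x) (φ y) / 2 ≤ dist x y}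
  obtain ⟨C, hCmax⟩ : ∃ m, Maximal (· ∈ S) m := by
    apply zorn_subset
    intro c hcS hchain
    refine ⟨⋃₀ c, ?_, fun s hs => Set.subset_sUnion_of_mem hs⟩
    rintro x ⟨A, hA, hxA⟩ y ⟨B, hB, hyB⟩ hxy
    rcases hchain.total hA hB with h | h
    · exact hcS hB x (h hxA) y hyB hxy
    · exact hcS hA x hxA y (h hyB) hxy
  have hCS : C ∈ S := hCmax.1
  -- every ball meets C
  have hnet : ∀ z : M, (Metric.ball z (φ z) ∩ C).Nonempty := by
    intro z
    by_contra hemp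
    rw [Set.not_nonempty_iff_eq_empty] at hemp
    have hzC : z ∉ C := fun hz => (Set.eq_empty_iff_forall_notMem.mp hemp z)
      ⟨Metric.mem_ball_self (hφpos z), hz⟩
    have hins : insert z C ∈ S := by
      intro x hx y hy hxy
      have key : ∀ w ∈ C, min (φ z) (φ w) / 2 ≤ dist z w := by
        intro w hw
        have hdw : φ z ≤ dist z w := by
          by_contra hlt
          push_neg at hlt
          exact (Set.eq_empty_iff_forall_notMem.mp hemp w)
            ⟨by rwa [Metric.mem_ball, dist_comm], hw⟩
        have h1 : min (φ z) (φ w) / 2 ≤ φ z := by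
          have := min_le_left (φ z) (φ w)
          linarith [hφpos z, hφpos w, min_le_left (φ z) (φ w)]
        linarith
      rcases hx with rfl | hx
      · rcases hy with rfl | hy
        · exact absurd rfl hxy
        · exact key y hy
      · rcases hy with rfl | hy
        · rw [dist_comm, min_comm]; exact key x hx
        · exact hCS x hx y hy hxy
    have := hCmax.2 hins (Set.subset_insert z C)
    exact hzC (this (Set.mem_insert z C))
  -- local: around each point, a small ball meets C in at most one point
  have hloc : ∀ z : M, ∃ r > 0, ∀ x ∈ Metric.ball z r ∩ C, ∀ y ∈ Metric.ball z r ∩ C, x = y := by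
    intro z
    have hU : {w | φ z / 2 < φ w} ∈ nhds z := by
      have : IsOpen {w | φ z / 2 < φ w} := isOpen_lt continuous_const hφcont
      exact this.mem_nhds (by show φ z / 2 < φ z; linarith [hφpos z])
    obtain ⟨ε, hε, hball⟩ := Metric.mem_nhds_iff.mp hU
    refine ⟨min ε (φ z / 8), lt_min hε (by linarith [hφpos z]), ?_⟩
    rintro x ⟨hxb, hxC⟩ y ⟨hyb, hyC⟩
    by_contra hxy
    have hx2 : φ z / 2 < φ x := hball (Metric.ball_subset_ball (min_le_left _ _) hxb)
    have hy2 : φ z / 2 < φ y := hball (Metric.ball_subset_ball (min_le_left _ _) hyb)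
    have hsep := hCS x hxC y hyC hxy
    have hmin : φ z / 4 ≤ min (φ x) (φ y) / 2 := by
      rcases min_cases (φ x) (φ y) with ⟨h, _⟩ | ⟨h, _⟩ <;> rw [h] <;> linarith
    have hdxy : dist x y < φ z / 4 := by
      have h1 : dist x z < φ z / 8 := Metric.mem_ball.mp (Metric.ball_subset_ball (min_le_right _ _) hxb)
      have h2 : dist y z < φ z / 8 := Metric.mem_ball.mp (Metric.ball_subset_ball (min_le_right _ _) hyb)
      calc dist x y ≤ dist x z + dist z y := dist_triangle _ _ _
        _ < φ z / 4 := by rw [dist_comm z y]; linarith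
    linarith
  -- closed and discrete
  have hcd : IsClosed C ∧ DiscreteTopology C := by
    rw [← isDiscrete_iff_discreteTopology, isClosed_and_discrete_iff]
    intro x
    obtain ⟨r, hr, hone⟩ := hloc x
    rw [Filter.disjoint_principal_right]
    rw [Metric.mem_nhdsWithin_iff]
    by_cases h : ∃ c ∈ Metric.ball x r ∩ C, c ≠ x
    · obtain ⟨c, hc, hcx⟩ := h
      refine ⟨dist x c, by simp [dist_pos.mpr (Ne.symm hcx)], ?_⟩
      rintro w ⟨hwb, hwx⟩ hwC
      have hwb' : dist w x < dist x c := Metric.mem_ball.mp hwb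
      have hwball : w ∈ Metric.ball x r := by
        rw [Metric.mem_ball]
        calc dist w x < dist x c := hwb'
          _ = dist c x := dist_comm x c
          _ < r := Metric.mem_ball.mp hc.1
      have hwc : w = c := hone w ⟨hwball, hwC⟩ c hc
      rw [hwc, dist_comm] at hwb'
      exact lt_irrefl _ hwb'
    · push_neg at h
      refine ⟨r, hr, ?_⟩
      rintro w ⟨hwb, hwx⟩ hwC
      exact hwx (h w ⟨hwb, hwC⟩)
  obtain ⟨hclosed, hdisc⟩ := hcd
  -- countable
  haveI : SecondCountableTopology M := UniformSpace.secondCountable_of_separable M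
  haveI : SecondCountableTopology C := inferInstance
  haveI : TopologicalSpace.SeparableSpace C :=
    TopologicalSpace.SecondCountableTopology.to_separableSpace
  have hcount : C.Countable := by
    rw [← Set.countable_coe_iff]
    exact (TopologicalSpace.separableSpace_iff_countable).mp inferInstance
  exact ⟨C, hcount, hclosed, hdisc, hnet⟩
end

section
/- Let a discrete group G act freely, isometrically, and metrically properly on a metric space (X,d), set ρ(x) = min{d(gx,x) : g ≠ 1}, and let E ⊆ X be a G-invariant closed discrete subset such that B(x, ρ(x)/4) ∩ E ≠ ∅ for all x ∈ X. Then for every x ∈ E and every g ∈ G with g ≠ 1, the closed Voronoi tiles satisfy V̂_x ∩ V̂_{gx} = ∅; in particular the quotient map X → X/G is injective on each closed tile V̂_x. -/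
/-- Let a discrete group `G` act freely, isometrically and metrically properly on a
metric space `(X, d)`, with `ρ(x) = min {d(g • x, x) : g ≠ 1}`. Let `E ⊆ X` be a
`G`-invariant closed discrete subset such that `B(x, ρ(x)/4) ∩ E ≠ ∅` for all `x`.
Then for every `x ∈ E` and `g ≠ 1`, the closed Voronoi tiles of `x` and `g • x` are
disjoint: `V̂ x ∩ V̂ (g • x) = ∅`. In particular, the quotient map `X → X/G` is
injective on each closed tile. -/
theorem voronoi_tiles_disjoint_orbits
    {G X : Type*} [Group G] [MetricSpace X] [MulAction G X]
    (hisom : ∀ g : G, Isometry fun x : X => g • x)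
    (hproper : ∀ x : X, ∀ r : ℝ, {g : G | dist (g • x) x ≤ r}.Finite)
    (hfree : ∀ (g : G) (x : X), g • x = x → g = 1)
    (ρ : X → ℝ)
    (hρ : ∀ x : X, IsLeast {r : ℝ | ∃ g : G, g ≠ 1 ∧ r = dist (g • x) x} (ρ x))
    (E : Set X)
    (hEinv : ∀ g : G, (g • ·) '' E = E)
    (hEclosed : IsClosed E) (hEdiscrete : DiscreteTopology E)
    (hEnet : ∀ x : X, (Metric.ball x (ρ x / 4) ∩ E).Nonempty) :
    ∀ x ∈ E, ∀ g : G, g ≠ 1 →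
      {y : X | ∀ x' ∈ E, x' ≠ x → dist y x ≤ dist y x'} ∩
        {y : X | ∀ x' ∈ E, x' ≠ g • x → dist y (g • x) ≤ dist y x'} = ∅ := by
  intro x hx g hg
  rw [Set.eq_empty_iff_forall_notMem]
  rintro y ⟨hy1, hy2⟩
  -- g • x ∈ E
  have hgxE : g • x ∈ E := by
    rw [← hEinv g]; exact ⟨x, hx, rfl⟩
  have hgx_ne : g • x ≠ x := fun h => hg (hfree g x h)
  -- net point near y
  obtain ⟨z, hzball, hzE⟩ := hEnet y
  have hzy : dist y z < ρ y / 4 := by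
    rw [dist_comm]; exact Metric.mem_ball.mp hzball
  -- dist y x < ρ y / 4
  have h1 : dist y x < ρ y / 4 := by
    rcases eq_or_ne z x with rfl | hne
    · exact hzy
    · exact lt_of_le_of_lt (hy1 z hzE hne) hzy
  have h2 : dist y (g • x) < ρ y / 4 := by
    rcases eq_or_ne z (g • x) with rfl | hne
    · exact hzy
    · exact lt_of_le_of_lt (hy2 z hzE hne) hzy
  -- ρ x ≤ dist (g • x) x
  have hρx : ρ x ≤ dist (g • x) x := (hρ x).2 ⟨g, hg, rfl⟩
  -- ρ y ≤ dist (g • y) y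
  have hρy : ρ y ≤ dist (g • y) y := (hρ y).2 ⟨g, hg, rfl⟩
  -- dist (g • x) x < ρ y / 2
  have hgxx : dist (g • x) x < ρ y / 2 := by
    calc dist (g • x) x ≤ dist (g • x) y + dist y x := dist_triangle _ _ _
    _ = dist y (g • x) + dist y x := by rw [dist_comm (g • x) y]
    _ < ρ y / 4 + ρ y / 4 := add_lt_add h2 h1
    _ = ρ y / 2 := by ring
  -- ρ y ≤ ρ x + 2 * dist x y
  have hLip : ρ y ≤ dist (g • x) x + 2 * dist x y := by
    calc ρ y ≤ dist (g • y) y := hρy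
    _ ≤ dist (g • y) (g • x) + dist (g • x) x + dist x y := by
        have := dist_triangle (g • y) (g • x) x
        have := dist_triangle (g • y) x y
        have h3 := dist_triangle (g • y) (g • x) y
        have h4 := dist_triangle (g • x) x y
        linarith
    _ = dist y x + dist (g • x) x + dist x y := by
        rw [show dist (g • y) (g • x) = dist y x from (hisom g).dist_eq y x]
    _ = dist (g • x) x + 2 * dist x y := by rw [dist_comm x y]; ring
  have hxy : dist x y < ρ y / 4 := by rwa [dist_comm]
  linarith
end
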